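/- Let f(n) be a real sequence such that there is a constant c₀ > 0 with |f(n) − f(m)| ≥ c₀ for all n ≠ m. Then for any bounded interval I ⊆ ℝ one has ∫_I W_f(x;N)² dx ≪ N (log N)³ for all N ≥ 2, where the implied constant depends only on c₀ and the length of I. -/

import Mathlib

open MeasureTheory

noncomputable def eC (z : ℝ) : ℂ := Complex.exp (2 * Real.pi * Complex.I * z)

lemma eC_add (u v : ℝ) : eC (u + v) = eC u * eC v := by
  simp [eC, ← Complex.exp_add]; ring_nf

lemma eC_conj (u : ℝ) : (starRingEnd ℂ) (eC u) = eC (-u) := by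
  rw [eC, ← Complex.exp_conj]
  congr 1
  simp [Complex.conj_I, map_ofNat]

lemma eC_abs (u : ℝ) : ‖eC u‖ = 1 := by
  rw [eC, Complex.norm_exp]
  norm_num [Complex.mul_re]

lemma eC_zero : eC 0 = 1 := by simp [eC]

lemma eC_continuous : Continuous eC := by
  unfold eC; fun_prop

lemma osc_bound {a b d : ℝ} (hab : a ≤ b) (hd : d ≠ 0) :
    ‖∫ x in Set.Icc a b, eC (x * d)‖ ≤ 1 / |d| := by
  have h2 : (2 * Real.pi * Complex.I * d : ℂ) ≠ 0 := by
    simp [Real.pi_ne_zero, Complex.I_ne_zero, Complex.ofReal_ne_zero, hd]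
  have he : ∀ x : ℝ, eC (x * d) = Complex.exp ((2 * Real.pi * Complex.I * d) * x) := by
    intro x; rw [eC]; push_cast; ring_nf
  rw [integral_Icc_eq_integral_Ioc, ← intervalIntegral.integral_of_le hab]
  simp_rw [he]
  rw [integral_exp_mul_complex h2]
  rw [norm_div]
  have habs : ∀ y : ℝ, ‖Complex.exp (2 * Real.pi * Complex.I * d * y)‖ = 1 := by
    intro y
    rw [Complex.norm_exp]
    have : (2 * Real.pi * Complex.I * d * y : ℂ).re = 0 := by
      simp [Complex.mul_re, Complex.mul_im]
    rw [this, Real.exp_zero]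
  have hden : ‖2 * Real.pi * Complex.I * (d : ℂ)‖ = 2 * Real.pi * |d| := by
    simp [norm_mul, abs_of_pos Real.pi_pos]
  rw [hden]
  have h1 : ‖Complex.exp (2 * Real.pi * Complex.I * d * b) -
      Complex.exp (2 * Real.pi * Complex.I * d * a)‖ ≤ 2 := by
    calc ‖_‖ ≤ ‖Complex.exp (2 * Real.pi * Complex.I * d * b)‖ +
        ‖Complex.exp (2 * Real.pi * Complex.I * d * a)‖ :=
          norm_sub_le _ _
      _ = 2 := by rw [habs, habs]; norm_num
  have hdpos : 0 < |d| := abs_pos.mpr hd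
  have hpos : (0:ℝ) < 2 * Real.pi * |d| := by positivity
  rw [div_le_div_iff₀ hpos hdpos]
  calc ‖_‖ * |d| ≤ 2 * |d| :=
        mul_le_mul_of_nonneg_right h1 (le_of_lt hdpos)
    _ ≤ 1 * (2 * Real.pi * |d|) := by nlinarith [Real.pi_gt_three, hdpos]

section CountLemmas
open Finset

lemma harmonic_cast_Icc (N : ℕ) :
    ∑ k ∈ Finset.Icc 1 N, ((k : ℝ))⁻¹ ≤ 1 + Real.log N := by
  have h1 := harmonic_le_one_add_log N
  have h2 : ((harmonic N : ℚ) : ℝ) = ∑ k ∈ Finset.Icc 1 N, ((k : ℝ))⁻¹ := by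
    rw [harmonic_eq_sum_Icc]
    push_cast
    rfl
  rw [← h2]
  exact_mod_cast h1

lemma harmonic_cast_range (N : ℕ) :
    ∑ k ∈ Finset.range N, (((k : ℝ)) + 1)⁻¹ ≤ 1 + Real.log N := by
  have h2 : ((harmonic N : ℚ) : ℝ) = ∑ k ∈ Finset.range N, (((k : ℝ)) + 1)⁻¹ := by
    rw [harmonic]
    push_cast
    rfl
  have h1 := harmonic_le_one_add_log N
  rw [← h2]
  exact_mod_cast h1

lemma count_bound {c₀ : ℝ} (hc₀ : 0 < c₀) {f : ℕ → ℝ}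
    (hsep : ∀ n m : ℕ, 1 ≤ n → 1 ≤ m → n ≠ m → c₀ ≤ |f n - f m|)
    {N n : ℕ} (hn : n ∈ Finset.Icc 1 N) :
    ∑ m ∈ (Finset.Icc 1 N).erase n, 1 / |f n - f m| ≤ (2 * (1 + Real.log N) + 1) / c₀ := by
  have hN1 : 1 ≤ N := le_trans (Finset.mem_Icc.mp hn).1 (Finset.mem_Icc.mp hn).2
  set s := (Finset.Icc 1 N).erase n with hs
  have hn1 : 1 ≤ n := (Finset.mem_Icc.mp hn).1
  have hmem : ∀ m ∈ s, 1 ≤ m ∧ m ≠ n ∧ c₀ ≤ |f n - f m| := by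
    intro m hm
    have h1 : m ≠ n := Finset.ne_of_mem_erase hm
    have h2 : 1 ≤ m := (Finset.mem_Icc.mp (Finset.mem_of_mem_erase hm)).1
    exact ⟨h2, h1, hsep n m hn1 h2 (Ne.symm h1)⟩
  set k : ℕ → ℕ := fun m => ⌊|f n - f m| / c₀⌋₊ with hk
  have hk1 : ∀ m ∈ s, 1 ≤ k m := by
    intro m hm
    have h := (hmem m hm).2.2
    have h' : (1:ℝ) ≤ |f n - f m| / c₀ := (one_le_div hc₀).mpr h
    exact Nat.le_floor (by exact_mod_cast h')
  have hklb : ∀ m ∈ s, (k m : ℝ) * c₀ ≤ |f n - f m| := by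
    intro m hm
    have h0 : (0:ℝ) ≤ |f n - f m| / c₀ := by positivity
    have hf := Nat.floor_le h0
    calc (k m : ℝ) * c₀ ≤ (|f n - f m| / c₀) * c₀ :=
          mul_le_mul_of_nonneg_right hf hc₀.le
      _ = |f n - f m| := div_mul_cancel₀ _ hc₀.ne'
  have hkub : ∀ m ∈ s, |f n - f m| < ((k m : ℝ) + 1) * c₀ := by
    intro m hm
    have hf := Nat.lt_floor_add_one (|f n - f m| / c₀)
    calc |f n - f m| = (|f n - f m| / c₀) * c₀ := (div_mul_cancel₀ _ hc₀.ne').symm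
      _ < ((k m : ℝ) + 1) * c₀ := mul_lt_mul_of_pos_right hf hc₀
  have hterm : ∀ m ∈ s, 1 / |f n - f m| ≤ 1 / ((k m : ℝ) * c₀) := by
    intro m hm
    have hpos : (0:ℝ) < (k m : ℝ) * c₀ := by
      have h := hk1 m hm
      have h' : (1:ℝ) ≤ (k m : ℝ) := by exact_mod_cast h
      nlinarith
    exact one_div_le_one_div_of_le hpos (hklb m hm)
  set g : ℕ → ℕ × Bool := fun m => (k m, decide (f n < f m)) with hg
  have hginj : ∀ m ∈ s, ∀ m' ∈ s, g m = g m' → m = m' := by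
    intro m hm m' hm' he
    by_contra hne
    have hsep' : c₀ ≤ |f m - f m'| :=
      hsep m m' (hmem m hm).1 (hmem m' hm').1 hne
    rw [Prod.mk.injEq] at he
    have hkk : k m = k m' := he.1
    have hside : (f n < f m) ↔ (f n < f m') := decide_eq_decide.mp he.2
    have h1 : (k m : ℝ) * c₀ ≤ |f n - f m| := hklb m hm
    have h2 : |f n - f m| < ((k m : ℝ) + 1) * c₀ := hkub m hm
    have h1' : (k m : ℝ) * c₀ ≤ |f n - f m'| := by rw [hkk]; exact hklb m' hm'
    have h2' : |f n - f m'| < ((k m : ℝ) + 1) * c₀ := by rw [hkk]; exact hkub m' hm'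
    have hmm' : |f m - f m'| < c₀ := by
      rcases lt_or_ge (f n) (f m) with hc | hc
      · have hc' : f n < f m' := hside.mp hc
        rw [abs_of_neg (by linarith : f n - f m < 0)] at h1 h2
        rw [abs_of_neg (by linarith : f n - f m' < 0)] at h1' h2'
        rw [abs_lt]; constructor <;> linarith
      · have hc' : ¬ f n < f m' := fun hx => absurd (hside.mpr hx) (not_lt.mpr hc)
        push_neg at hc'
        rw [abs_of_nonneg (by linarith : 0 ≤ f n - f m)] at h1 h2
        rw [abs_of_nonneg (by linarith : 0 ≤ f n - f m')] at h1' h2'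
        rw [abs_lt]; constructor <;> linarith
    linarith
  have hsum1 : ∑ m ∈ s, 1 / |f n - f m| ≤ ∑ m ∈ s, 1 / ((k m : ℝ) * c₀) :=
    Finset.sum_le_sum hterm
  have hsplit : ∑ m ∈ s, 1 / ((k m : ℝ) * c₀)
      = ∑ m ∈ s.filter (fun m => k m ≤ N), 1 / ((k m : ℝ) * c₀)
        + ∑ m ∈ s.filter (fun m => ¬ k m ≤ N), 1 / ((k m : ℝ) * c₀) :=
    (Finset.sum_filter_add_sum_filter_not s _ _).symm
  have hcard : s.card ≤ N := by
    calc s.card ≤ (Finset.Icc 1 N).card := Finset.card_le_card (Finset.erase_subset _ _)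
      _ = N := by simp [Nat.card_Icc]
  have hbound2 : ∑ m ∈ s.filter (fun m => ¬ k m ≤ N), 1 / ((k m : ℝ) * c₀) ≤ 1 / c₀ := by
    have hNpos : (0:ℝ) < (N:ℝ) * c₀ := by
      have : (1:ℝ) ≤ (N:ℝ) := by exact_mod_cast hN1
      nlinarith
    have ht : ∀ m ∈ s.filter (fun m => ¬ k m ≤ N), 1 / ((k m : ℝ) * c₀) ≤ 1 / ((N:ℝ) * c₀) := by
      intro m hm
      have h := (Finset.mem_filter.mp hm).2
      have h' : (N:ℝ) ≤ (k m : ℝ) := by exact_mod_cast le_of_not_ge h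
      exact one_div_le_one_div_of_le hNpos (mul_le_mul_of_nonneg_right h' hc₀.le)
    calc ∑ m ∈ s.filter (fun m => ¬ k m ≤ N), 1 / ((k m : ℝ) * c₀)
        ≤ ∑ _m ∈ s.filter (fun m => ¬ k m ≤ N), 1 / ((N:ℝ) * c₀) := Finset.sum_le_sum ht
      _ = ((s.filter (fun m => ¬ k m ≤ N)).card : ℝ) * (1 / ((N:ℝ) * c₀)) := by
          rw [Finset.sum_const, nsmul_eq_mul]
      _ ≤ (N : ℝ) * (1 / ((N:ℝ) * c₀)) := by
          apply mul_le_mul_of_nonneg_right _ (by positivity)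
          exact_mod_cast (Finset.card_filter_le _ _).trans hcard
      _ = 1 / c₀ := by
          field_simp
  have hbound1 : ∑ m ∈ s.filter (fun m => k m ≤ N), 1 / ((k m : ℝ) * c₀)
      ≤ 2 * (1 + Real.log N) / c₀ := by
    set s₁ := s.filter (fun m => k m ≤ N) with hs₁
    have hinj1 : ∀ m ∈ s₁, ∀ m' ∈ s₁, g m = g m' → m = m' := by
      intro m hm m' hm'
      exact hginj m (Finset.mem_of_mem_filter _ hm) m' (Finset.mem_of_mem_filter _ hm')
    have himg : ∑ m ∈ s₁, 1 / ((k m : ℝ) * c₀)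
        = ∑ p ∈ s₁.image g, 1 / ((p.1 : ℝ) * c₀) := by
      rw [Finset.sum_image hinj1]
    have hsub : s₁.image g ⊆ Finset.Icc 1 N ×ˢ (Finset.univ : Finset Bool) := by
      intro p hp
      obtain ⟨m, hm, rfl⟩ := Finset.mem_image.mp hp
      refine Finset.mem_product.mpr ⟨?_, Finset.mem_univ _⟩
      refine Finset.mem_Icc.mpr ⟨hk1 m (Finset.mem_of_mem_filter _ hm),
        (Finset.mem_filter.mp hm).2⟩
    calc ∑ m ∈ s₁, 1 / ((k m : ℝ) * c₀)
        = ∑ p ∈ s₁.image g, 1 / ((p.1 : ℝ) * c₀) := himg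
      _ ≤ ∑ p ∈ Finset.Icc 1 N ×ˢ (Finset.univ : Finset Bool), 1 / ((p.1 : ℝ) * c₀) := by
          apply Finset.sum_le_sum_of_subset_of_nonneg hsub
          intro p _ _
          positivity
      _ = ∑ j ∈ Finset.Icc 1 N, ∑ _b : Bool, 1 / ((j : ℝ) * c₀) := by rw [Finset.sum_product]
      _ = ∑ j ∈ Finset.Icc 1 N, 2 * (1 / ((j : ℝ) * c₀)) := by
          apply Finset.sum_congr rfl
          intro j _
          simp [two_mul]
      _ = (2 / c₀) * ∑ j ∈ Finset.Icc 1 N, ((j : ℝ))⁻¹ := by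
          rw [Finset.mul_sum]
          apply Finset.sum_congr rfl
          intro j _
          field_simp
      _ ≤ (2 / c₀) * (1 + Real.log N) := by
          apply mul_le_mul_of_nonneg_left (harmonic_cast_Icc N) (by positivity)
      _ = 2 * (1 + Real.log N) / c₀ := by ring
  calc ∑ m ∈ s, 1 / |f n - f m| ≤ ∑ m ∈ s, 1 / ((k m : ℝ) * c₀) := hsum1
    _ = _ + _ := hsplit
    _ ≤ 2 * (1 + Real.log N) / c₀ + 1 / c₀ := add_le_add hbound1 hbound2
    _ = (2 * (1 + Real.log N) + 1) / c₀ := by ring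

lemma A_bound (N : ℕ) :
    ∑ h ∈ Finset.Icc (-(N:ℤ)) (N:ℤ), (1 / (|(h:ℝ)| + 1)) ≤ 2 * (1 + Real.log (N+1)) := by
  set φ : ℤ → ℕ × Bool := fun h => (h.natAbs, decide (0 ≤ h)) with hφ
  have hterm : ∀ h : ℤ, (1 / (|(h:ℝ)| + 1)) = 1 / (((φ h).1 : ℝ) + 1) := by
    intro h
    simp only [φ, Nat.cast_natAbs, Int.cast_abs]
  have hinj : ∀ h ∈ Finset.Icc (-(N:ℤ)) (N:ℤ), ∀ h' ∈ Finset.Icc (-(N:ℤ)) (N:ℤ),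
      φ h = φ h' → h = h' := by
    intro h _ h' _ he
    rw [Prod.mk.injEq] at he
    have h1 := he.1
    have h2 := decide_eq_decide.mp he.2
    omega
  have hsub : (Finset.Icc (-(N:ℤ)) (N:ℤ)).image φ
      ⊆ Finset.range (N+1) ×ˢ (Finset.univ : Finset Bool) := by
    intro p hp
    obtain ⟨h, hh, rfl⟩ := Finset.mem_image.mp hp
    rw [Finset.mem_Icc] at hh
    refine Finset.mem_product.mpr ⟨Finset.mem_range.mpr ?_, Finset.mem_univ _⟩
    simp only [φ]
    omega
  calc ∑ h ∈ Finset.Icc (-(N:ℤ)) (N:ℤ), (1 / (|(h:ℝ)| + 1))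
      = ∑ h ∈ Finset.Icc (-(N:ℤ)) (N:ℤ), 1 / (((φ h).1 : ℝ) + 1) := by
        exact Finset.sum_congr rfl fun h _ => hterm h
    _ = ∑ p ∈ (Finset.Icc (-(N:ℤ)) (N:ℤ)).image φ, 1 / ((p.1 : ℝ) + 1) := by
        rw [Finset.sum_image hinj]
    _ ≤ ∑ p ∈ Finset.range (N+1) ×ˢ (Finset.univ : Finset Bool), 1 / ((p.1 : ℝ) + 1) := by
        apply Finset.sum_le_sum_of_subset_of_nonneg hsub
        intro p _ _
        positivity
    _ = ∑ j ∈ Finset.range (N+1), ∑ _b : Bool, 1 / ((j : ℝ) + 1) := by rw [Finset.sum_product]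
    _ = 2 * ∑ j ∈ Finset.range (N+1), (((j : ℝ)) + 1)⁻¹ := by
        rw [Finset.mul_sum]
        apply Finset.sum_congr rfl
        intro j _
        simp [two_mul, one_div]
    _ ≤ 2 * (1 + Real.log (N+1)) := by
        have h := harmonic_cast_range (N+1)
        have : ((N:ℝ) + 1) = ((N+1 : ℕ) : ℝ) := by push_cast; ring
        rw [this]
        linarith

end CountLemmas
lemma second_moment {c₀ : ℝ} (hc₀ : 0 < c₀) {f : ℕ → ℝ}
    (hsep : ∀ n m : ℕ, 1 ≤ n → 1 ≤ m → n ≠ m → c₀ ≤ |f n - f m|)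
    {a b : ℝ} (hab : a ≤ b) {N : ℕ} (hN : 1 ≤ N) (h : ℤ) :
    ∫ x in Set.Icc a b,
        ‖∑ n ∈ Finset.Icc 1 N, eC ((h:ℝ) * n / N + x * f n)‖ ^ 2
      ≤ (b - a) * N + N * ((2 * (1 + Real.log N) + 1) / c₀) := by
  set c : ℕ → ℕ → ℂ := fun n m => eC ((h:ℝ) * n / N - (h:ℝ) * m / N) with hc
  set T : ℕ → ℕ → ℝ → ℂ := fun n m x => c n m * eC (x * (f n - f m)) with hT
  -- pointwise expansion
  have hpt : ∀ x : ℝ,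
      ‖∑ n ∈ Finset.Icc 1 N, eC ((h:ℝ) * n / N + x * f n)‖ ^ 2
        = ∑ n ∈ Finset.Icc 1 N, ∑ m ∈ Finset.Icc 1 N, (T n m x).re := by
    intro x
    set S := ∑ n ∈ Finset.Icc 1 N, eC ((h:ℝ) * n / N + x * f n) with hS
    have h1 : (‖S‖) ^ 2 = (S * (starRingEnd ℂ) S).re := by
      rw [Complex.sq_norm, Complex.mul_conj]
      simp
    have h2 : S * (starRingEnd ℂ) S
        = ∑ n ∈ Finset.Icc 1 N, ∑ m ∈ Finset.Icc 1 N, T n m x := by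
      rw [hS, map_sum, Finset.sum_mul_sum]
      apply Finset.sum_congr rfl
      intro n _
      apply Finset.sum_congr rfl
      intro m _
      rw [eC_conj, ← eC_add]
      have : (h:ℝ) * n / N + x * f n + -((h:ℝ) * m / N + x * f m)
          = ((h:ℝ) * n / N - (h:ℝ) * m / N) + x * (f n - f m) := by ring
      rw [this, eC_add]
    rw [h1, h2, Complex.re_sum]
    apply Finset.sum_congr rfl
    intro n _
    rw [Complex.re_sum]
  have hcontT : ∀ n m : ℕ, Continuous (T n m) := by
    intro n m
    exact continuous_const.mul (eC_continuous.comp (continuous_mul_right _))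
  have hcontTre : ∀ n m : ℕ, Continuous (fun x => (T n m x).re) := by
    intro n m
    exact Complex.continuous_re.comp (hcontT n m)
  -- swap integral and sums
  have hswap : ∫ x in Set.Icc a b,
      (∑ n ∈ Finset.Icc 1 N, ∑ m ∈ Finset.Icc 1 N, (T n m x).re)
      = ∑ n ∈ Finset.Icc 1 N, ∑ m ∈ Finset.Icc 1 N,
          ∫ x in Set.Icc a b, (T n m x).re := by
    rw [integral_finset_sum]
    · apply Finset.sum_congr rfl
      intro n _
      rw [integral_finset_sum]
      intro m _
      exact ((hcontTre n m).integrableOn_Icc)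
    · intro n _
      apply integrable_finset_sum
      intro m _
      exact ((hcontTre n m).integrableOn_Icc)
  -- diagonal
  have hdiag : ∀ n : ℕ, ∫ x in Set.Icc a b, (T n n x).re = b - a := by
    intro n
    have hone : ∀ x : ℝ, (T n n x).re = 1 := by
      intro x
      simp [hT, hc, sub_self, mul_zero, eC_zero]
    calc ∫ x in Set.Icc a b, (T n n x).re = ∫ _x in Set.Icc a b, (1:ℝ) := by
          apply integral_congr_ae
          filter_upwards with x using hone x
      _ = b - a := by
          rw [setIntegral_const, measureReal_def, Real.volume_Icc, smul_eq_mul, mul_one,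
            ENNReal.toReal_ofReal (by linarith)]
  -- off-diagonal
  have hoff : ∀ n ∈ Finset.Icc 1 N, ∀ m ∈ (Finset.Icc 1 N).erase n,
      ∫ x in Set.Icc a b, (T n m x).re ≤ 1 / |f n - f m| := by
    intro n hn m hm
    have hn1 : 1 ≤ n := (Finset.mem_Icc.mp hn).1
    have hm1 : 1 ≤ m := (Finset.mem_Icc.mp (Finset.mem_of_mem_erase hm)).1
    have hnm : m ≠ n := Finset.ne_of_mem_erase hm
    have hd : f n - f m ≠ 0 := by
      have := hsep n m hn1 hm1 (Ne.symm hnm)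
      intro hx
      rw [hx, abs_zero] at this
      linarith
    have hint : IntegrableOn (T n m) (Set.Icc a b) := (hcontT n m).integrableOn_Icc
    calc ∫ x in Set.Icc a b, (T n m x).re
        = (∫ x in Set.Icc a b, T n m x).re := (integral_re hint)
      _ ≤ ‖∫ x in Set.Icc a b, T n m x‖ := Complex.re_le_norm _
      _ = ‖c n m‖ * ‖∫ x in Set.Icc a b, eC (x * (f n - f m))‖ := by
          rw [hT]
          simp only []
          rw [MeasureTheory.integral_const_mul, norm_mul]
      _ ≤ 1 * (1 / |f n - f m|) := by
          apply mul_le_mul _ (osc_bound hab hd) (by positivity) (by norm_num)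
          rw [hc]
          rw [eC_abs]
      _ = 1 / |f n - f m| := one_mul _
  -- assemble
  have hrow : ∀ n ∈ Finset.Icc 1 N,
      ∑ m ∈ Finset.Icc 1 N, ∫ x in Set.Icc a b, (T n m x).re
        ≤ (b - a) + (2 * (1 + Real.log N) + 1) / c₀ := by
    intro n hn
    rw [← Finset.add_sum_erase _ _ hn]
    apply add_le_add (le_of_eq (hdiag n))
    calc ∑ m ∈ (Finset.Icc 1 N).erase n, ∫ x in Set.Icc a b, (T n m x).re
        ≤ ∑ m ∈ (Finset.Icc 1 N).erase n, 1 / |f n - f m| :=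
          Finset.sum_le_sum (hoff n hn)
      _ ≤ (2 * (1 + Real.log N) + 1) / c₀ := count_bound hc₀ hsep hn
  calc ∫ x in Set.Icc a b,
        ‖∑ n ∈ Finset.Icc 1 N, eC ((h:ℝ) * n / N + x * f n)‖ ^ 2
      = ∫ x in Set.Icc a b,
          (∑ n ∈ Finset.Icc 1 N, ∑ m ∈ Finset.Icc 1 N, (T n m x).re) := by
        apply integral_congr_ae
        filter_upwards with x using hpt x
    _ = ∑ n ∈ Finset.Icc 1 N, ∑ m ∈ Finset.Icc 1 N,
          ∫ x in Set.Icc a b, (T n m x).re := hswap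
    _ ≤ ∑ _n ∈ Finset.Icc 1 N, ((b - a) + (2 * (1 + Real.log N) + 1) / c₀) :=
        Finset.sum_le_sum hrow
    _ = (N : ℝ) * ((b - a) + (2 * (1 + Real.log N) + 1) / c₀) := by
        rw [Finset.sum_const, nsmul_eq_mul, Nat.card_Icc]
        simp
    _ = (b - a) * N + N * ((2 * (1 + Real.log N) + 1) / c₀) := by ring

noncomputable def wSum (f : ℕ → ℝ) (x : ℝ) (N : ℕ) : ℝ :=
  ∑ h ∈ Finset.Icc (-(N : ℤ)) (N : ℤ),
    (1 / (|(h : ℝ)| + 1)) *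
      ‖∑ n ∈ Finset.Icc 1 N, eC ((h : ℝ) * n / N + x * f n)‖

lemma cs_pointwise (f : ℕ → ℝ) (x : ℝ) (N : ℕ) :
    wSum f x N ^ 2 ≤ (∑ h ∈ Finset.Icc (-(N:ℤ)) (N:ℤ), (1 / (|(h:ℝ)| + 1))) *
      ∑ h ∈ Finset.Icc (-(N:ℤ)) (N:ℤ), (1 / (|(h:ℝ)| + 1)) *
        ‖∑ n ∈ Finset.Icc 1 N, eC ((h:ℝ) * n / N + x * f n)‖ ^ 2 := by
  apply Finset.sum_sq_le_sum_mul_sum_of_sq_eq_mul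
  · intro i _; positivity
  · intro i _; positivity
  · intro i _; ring

set_option maxHeartbeats 1000000 in
/-- For a `c₀`-separated sequence, `∫_I W_f(x;N)² dx ≪ N (log N)³`, with the implied
constant depending only on `c₀` and on the length of the interval `I`. -/
theorem stmt18 (c₀ : ℝ) (hc₀ : 0 < c₀) (L : ℝ) :
    ∃ C > (0 : ℝ), ∀ f : ℕ → ℝ,
      (∀ n m : ℕ, 1 ≤ n → 1 ≤ m → n ≠ m → c₀ ≤ |f n - f m|) →
      ∀ a b : ℝ, b - a ≤ L → ∀ N : ℕ, 2 ≤ N →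
        ∫ x in Set.Icc a b, wSum f x N ^ 2 ≤ C * N * Real.log N ^ 3 := by
  have hl2 : (0:ℝ) < Real.log 2 := Real.log_pos (by norm_num)
  set K : ℝ := max L 0 with hK
  set a₁ : ℝ := 2 / Real.log 2 + 4 with ha₁
  set d₁ : ℝ := K / Real.log 2 + 3 / (c₀ * Real.log 2) + 2 / c₀ with hd₁
  have ha₁pos : 0 < a₁ := by positivity
  have hd₁pos : 0 < d₁ := by
    have hK0 : 0 ≤ K := le_max_right _ _
    have : 0 < 2 / c₀ := by positivity
    have h2 : 0 ≤ K / Real.log 2 := by positivity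
    have h3 : 0 < 3 / (c₀ * Real.log 2) := by positivity
    rw [hd₁]; linarith
  refine ⟨a₁ ^ 2 * d₁ + 1, by positivity, ?_⟩
  intro f hsep a b hba N hN
  have hN1 : (1:ℕ) ≤ N := le_trans (by norm_num) hN
  have hlN : Real.log 2 ≤ Real.log N :=
    Real.log_le_log (by norm_num) (by exact_mod_cast hN)
  have hlNpos : 0 < Real.log N := lt_of_lt_of_le hl2 hlN
  -- the trivial empty case
  rcases lt_or_ge b a with hab | hab
  · rw [Set.Icc_eq_empty (not_le.mpr hab)]
    simp only [Measure.restrict_empty, integral_zero_measure]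
    positivity
  -- main case
  have hba' : 0 ≤ b - a := by linarith
  have hbaK : b - a ≤ K := le_trans hba (le_max_left _ _)
  set A : ℝ := ∑ h ∈ Finset.Icc (-(N:ℤ)) (N:ℤ), (1 / (|(h:ℝ)| + 1)) with hA
  have hAnn : 0 ≤ A := Finset.sum_nonneg fun i _ => by positivity
  have hAle : A ≤ a₁ * Real.log N := by
    have h1 : A ≤ 2 * (1 + Real.log (N+1)) := A_bound N
    have h2 : Real.log (N+1) ≤ 2 * Real.log N := by
      have hle : ((N:ℝ)+1) ≤ (N:ℝ)^2 := by
        have : (2:ℝ) ≤ (N:ℝ) := by exact_mod_cast hN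
        nlinarith
      calc Real.log (N+1) ≤ Real.log ((N:ℝ)^2) :=
            Real.log_le_log (by positivity) hle
        _ = 2 * Real.log N := by
            rw [Real.log_pow]; norm_num
    have h3 : (2:ℝ) ≤ (2 / Real.log 2) * Real.log N := by
      rw [div_mul_eq_mul_div, le_div_iff₀ hl2]
      nlinarith
    calc A ≤ 2 * (1 + Real.log (N+1)) := h1
      _ ≤ 2 + 4 * Real.log N := by linarith
      _ ≤ a₁ * Real.log N := by rw [ha₁, add_mul]; linarith [h3]
  set D : ℝ := (b - a) * N + N * ((2 * (1 + Real.log N) + 1) / c₀) with hD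
  have hDnn : 0 ≤ D := by
    have : (0:ℝ) ≤ (N:ℝ) := by positivity
    have h4 : 0 ≤ (2 * (1 + Real.log N) + 1) / c₀ := by positivity
    rw [hD]; positivity
  have hDle : D ≤ d₁ * ((N:ℝ) * Real.log N) := by
    have hNr : (0:ℝ) < (N:ℝ) := by exact_mod_cast Nat.lt_of_lt_of_le (by norm_num) hN
    have h5 : b - a ≤ (K / Real.log 2) * Real.log N := by
      calc b - a ≤ K := hbaK
        _ = (K / Real.log 2) * Real.log 2 := by field_simp
        _ ≤ (K / Real.log 2) * Real.log N := by
            apply mul_le_mul_of_nonneg_left hlN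
            positivity
    have h6 : (2 * (1 + Real.log N) + 1) / c₀
        ≤ (3 / (c₀ * Real.log 2) + 2 / c₀) * Real.log N := by
      rw [div_le_iff₀ hc₀] at *
      have h7 : (3:ℝ) ≤ (3 / Real.log 2) * Real.log N := by
        rw [div_mul_eq_mul_div, le_div_iff₀ hl2]; nlinarith
      have expand : (3 / (c₀ * Real.log 2) + 2 / c₀) * Real.log N * c₀
          = (3 / Real.log 2) * Real.log N + 2 * Real.log N := by
        field_simp
      rw [expand]
      linarith
    calc D ≤ (K / Real.log 2) * Real.log N * N
          + N * ((3 / (c₀ * Real.log 2) + 2 / c₀) * Real.log N) := by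
          rw [hD]
          apply add_le_add
          · exact mul_le_mul_of_nonneg_right h5 hNr.le
          · exact mul_le_mul_of_nonneg_left h6 hNr.le
      _ = d₁ * ((N:ℝ) * Real.log N) := by rw [hd₁]; ring
  -- continuity facts
  have hScont : ∀ h : ℤ,
      Continuous (fun x : ℝ => ∑ n ∈ Finset.Icc 1 N, eC ((h:ℝ) * n / N + x * f n)) := by
    intro h
    apply continuous_finset_sum
    intro n _
    exact eC_continuous.comp (continuous_const.add (continuous_mul_right _))
  have hwcont : Continuous (fun x : ℝ => wSum f x N) := by
    unfold wSum
    apply continuous_finset_sum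
    intro h _
    exact continuous_const.mul (continuous_norm.comp (hScont h))
  have hRcont : Continuous (fun x : ℝ =>
      ∑ h ∈ Finset.Icc (-(N:ℤ)) (N:ℤ), (1 / (|(h:ℝ)| + 1)) *
        ‖∑ n ∈ Finset.Icc 1 N, eC ((h:ℝ) * n / N + x * f n)‖ ^ 2) := by
    apply continuous_finset_sum
    intro h _
    exact continuous_const.mul ((continuous_norm.comp (hScont h)).pow 2)
  -- integral inequality
  have step1 : ∫ x in Set.Icc a b, wSum f x N ^ 2
      ≤ ∫ x in Set.Icc a b, A *
          ∑ h ∈ Finset.Icc (-(N:ℤ)) (N:ℤ), (1 / (|(h:ℝ)| + 1)) *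
            ‖∑ n ∈ Finset.Icc 1 N, eC ((h:ℝ) * n / N + x * f n)‖ ^ 2 := by
    apply setIntegral_mono_on
    · exact (hwcont.pow 2).integrableOn_Icc
    · exact (continuous_const.mul hRcont).integrableOn_Icc
    · exact measurableSet_Icc
    · intro x _
      exact cs_pointwise f x N
  have step2 : ∫ x in Set.Icc a b, A *
          ∑ h ∈ Finset.Icc (-(N:ℤ)) (N:ℤ), (1 / (|(h:ℝ)| + 1)) *
            ‖∑ n ∈ Finset.Icc 1 N, eC ((h:ℝ) * n / N + x * f n)‖ ^ 2
      = A * ∑ h ∈ Finset.Icc (-(N:ℤ)) (N:ℤ), (1 / (|(h:ℝ)| + 1)) *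
          ∫ x in Set.Icc a b,
            ‖∑ n ∈ Finset.Icc 1 N, eC ((h:ℝ) * n / N + x * f n)‖ ^ 2 := by
    rw [MeasureTheory.integral_const_mul]
    congr 1
    rw [integral_finset_sum]
    · apply Finset.sum_congr rfl
      intro h _
      rw [MeasureTheory.integral_const_mul]
    · intro h _
      exact (continuous_const.mul ((continuous_norm.comp (hScont h)).pow 2)).integrableOn_Icc
  have step3 : ∑ h ∈ Finset.Icc (-(N:ℤ)) (N:ℤ), (1 / (|(h:ℝ)| + 1)) *
          (∫ x in Set.Icc a b,
            ‖∑ n ∈ Finset.Icc 1 N, eC ((h:ℝ) * n / N + x * f n)‖ ^ 2)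
      ≤ A * D := by
    rw [hA, Finset.sum_mul]
    apply Finset.sum_le_sum
    intro h _
    apply mul_le_mul_of_nonneg_left _ (by positivity)
    exact second_moment hc₀ hsep hab hN1 h
  calc ∫ x in Set.Icc a b, wSum f x N ^ 2
      ≤ A * (A * D) := by
        rw [step2] at step1
        refine le_trans step1 (mul_le_mul_of_nonneg_left step3 hAnn)
    _ ≤ (a₁ * Real.log N) * ((a₁ * Real.log N) * (d₁ * ((N:ℝ) * Real.log N))) := by
        apply mul_le_mul hAle _ (by positivity) (by positivity)
        apply mul_le_mul hAle hDle hDnn (by positivity)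
    _ = a₁ ^ 2 * d₁ * N * Real.log N ^ 3 := by ring
    _ ≤ (a₁ ^ 2 * d₁ + 1) * N * Real.log N ^ 3 := by
        have : (0:ℝ) < (N:ℝ) := by exact_mod_cast Nat.lt_of_lt_of_le (by norm_num) hN
        nlinarith [pow_pos hlNpos 3]
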